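/- For every real parameter a > -1, the ratio F_{a+1}(x)/F_a(x) tends to 0 as x → +∞ and tends to +∞ as x → -∞. -/

import Mathlib

/-!
`Fa (a + 1) x / Fa a x` is the mean of `t` under the density `exp (-t² - 2xt) tᵃ` on `(0, ∞)`,
which is the density at `x = 0` reweighted by `exp (-2xt)`. For `x → +∞` and `c > 0`, the part of
`Fa (a + 1) x` over `(c, ∞)` is at most `exp (-2xc) Fa (a + 1) 0`, while `Fa a x` is at least
`exp (-xc)` times the (positive) part of `Fa a 0` over `(0, c/2]`; so the mean is at most
`c + O(exp (-xc))`. For `x → -∞` the part of `Fa a x` over `(0, c]` is at most `exp (-2xc) Fa a 0`,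
while its part over `(2c, ∞)` is at least `exp (-4xc)` times a positive constant; so eventually
at least half of the mass lies beyond `c`, and the mean is at least `c / 2`.
-/

open MeasureTheory Real Filter

/-- `Fa a x = ∫₀^∞ exp(-t² - 2xt) · t^a dt`, a Hermite-type function of negative degree. -/
noncomputable def Fa (a x : ℝ) : ℝ :=
  ∫ t in Set.Ioi (0 : ℝ), Real.exp (-(t ^ 2) - 2 * x * t) * t ^ a

open Set

noncomputable def FaOn (a x : ℝ) (s : Set ℝ) : ℝ :=
  ∫ t in s, exp (-(t ^ 2) - 2 * x * t) * t ^ a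

section FaOn

variable {a x c : ℝ} {s : Set ℝ}

lemma integrableOn_Fa_integrand (ha : -1 < a) (x : ℝ) :
    IntegrableOn (fun t => exp (-(t ^ 2) - 2 * x * t) * t ^ a) (Ioi 0) := by
  refine ((integrableOn_rpow_mul_exp_neg_mul_sq (b := 1 / 2) (by norm_num) ha).const_mul
    (exp (2 * x ^ 2))).mono' (by fun_prop) ?_
  filter_upwards [ae_restrict_mem measurableSet_Ioi] with t (ht : 0 < t)
  have hta : 0 ≤ t ^ a := rpow_nonneg ht.le a
  rw [norm_of_nonneg (by positivity), mul_comm (t ^ a), ← mul_assoc, ← exp_add]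
  exact mul_le_mul_of_nonneg_right (exp_le_exp.2 (by nlinarith [sq_nonneg (t + 2 * x)])) hta

lemma integrableOn_Fa_integrand_of_subset (ha : -1 < a) (hs : s ⊆ Ioi 0) :
    IntegrableOn (fun t => exp (-(t ^ 2) - 2 * x * t) * t ^ a) s :=
  (integrableOn_Fa_integrand ha x).mono_set hs

lemma Fa_integrand_pos {t : ℝ} (ht : 0 < t) : 0 < exp (-(t ^ 2) - 2 * x * t) * t ^ a :=
  mul_pos (exp_pos _) (rpow_pos_of_pos ht a)

lemma FaOn_pos (ha : -1 < a) (hs : MeasurableSet s) (hs0 : s ⊆ Ioi 0) (hvol : volume s ≠ 0) :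
    0 < FaOn a x s := by
  have hsupp : Function.support (fun t => exp (-(t ^ 2) - 2 * x * t) * t ^ a) ∩ s = s :=
    inter_eq_right.2 fun t ht => (Fa_integrand_pos (hs0 ht)).ne'
  rw [FaOn, setIntegral_pos_iff_support_of_nonneg_ae _ (integrableOn_Fa_integrand_of_subset ha hs0),
    hsupp]
  · exact pos_iff_ne_zero.2 hvol
  · filter_upwards [ae_restrict_mem hs] with t ht using (Fa_integrand_pos (hs0 ht)).le

lemma Fa_pos (ha : -1 < a) (x : ℝ) : 0 < Fa a x :=
  FaOn_pos ha measurableSet_Ioi subset_rfl (by simp)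

lemma FaOn_mono_set {t : Set ℝ} (ha : -1 < a) (ht : MeasurableSet t) (ht0 : t ⊆ Ioi 0)
    (hst : s ⊆ t) : FaOn a x s ≤ FaOn a x t :=
  setIntegral_mono_set (integrableOn_Fa_integrand_of_subset ha ht0)
    (by filter_upwards [ae_restrict_mem ht] with t ht using (Fa_integrand_pos (ht0 ht)).le)
    hst.eventuallyLE

lemma FaOn_le_Fa (ha : -1 < a) (hs : s ⊆ Ioi 0) : FaOn a x s ≤ Fa a x :=
  FaOn_mono_set ha measurableSet_Ioi subset_rfl hs

lemma FaOn_nonneg (hs : MeasurableSet s) (hs0 : s ⊆ Ioi 0) : 0 ≤ FaOn a x s :=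
  setIntegral_nonneg hs fun _ ht => (Fa_integrand_pos (hs0 ht)).le

lemma Fa_eq_FaOn_Ioc_add_FaOn_Ioi (ha : -1 < a) (hc : 0 ≤ c) :
    Fa a x = FaOn a x (Ioc 0 c) + FaOn a x (Ioi c) := by
  rw [Fa, ← Ioc_union_Ioi_eq_Ioi hc, setIntegral_union (Ioc_disjoint_Ioi le_rfl) measurableSet_Ioi
    (integrableOn_Fa_integrand_of_subset ha Ioc_subset_Ioi_self)
    (integrableOn_Fa_integrand_of_subset ha (Ioi_subset_Ioi hc))]
  rfl

lemma FaOn_le_exp_mul_FaOn_zero (ha : -1 < a) (hs : MeasurableSet s) (hs0 : s ⊆ Ioi 0)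
    (hc : ∀ t ∈ s, x * c ≤ x * t) : FaOn a x s ≤ exp (-(2 * x * c)) * FaOn a 0 s := by
  rw [FaOn, FaOn, ← integral_const_mul]
  refine setIntegral_mono_on (integrableOn_Fa_integrand_of_subset ha hs0)
    ((integrableOn_Fa_integrand_of_subset ha hs0).const_mul _) hs fun t ht => ?_
  rw [← mul_assoc, ← exp_add]
  exact mul_le_mul_of_nonneg_right (exp_le_exp.2 (by nlinarith [hc t ht]))
    (rpow_nonneg (hs0 ht).le a)

lemma exp_mul_FaOn_zero_le_FaOn (ha : -1 < a) (hs : MeasurableSet s) (hs0 : s ⊆ Ioi 0)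
    (hc : ∀ t ∈ s, x * t ≤ x * c) : exp (-(2 * x * c)) * FaOn a 0 s ≤ FaOn a x s := by
  rw [FaOn, FaOn, ← integral_const_mul]
  refine setIntegral_mono_on ((integrableOn_Fa_integrand_of_subset ha hs0).const_mul _)
    (integrableOn_Fa_integrand_of_subset ha hs0) hs fun t ht => ?_
  rw [← mul_assoc, ← exp_add]
  exact mul_le_mul_of_nonneg_right (exp_le_exp.2 (by nlinarith [hc t ht]))
    (rpow_nonneg (hs0 ht).le a)

lemma FaOn_add_one_le_mul (ha : -1 < a) (hs : MeasurableSet s) (hs0 : s ⊆ Ioi 0)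
    (hc : ∀ t ∈ s, t ≤ c) : FaOn (a + 1) x s ≤ c * FaOn a x s := by
  rw [FaOn, FaOn, ← integral_const_mul]
  refine setIntegral_mono_on (integrableOn_Fa_integrand_of_subset (by linarith) hs0)
    ((integrableOn_Fa_integrand_of_subset ha hs0).const_mul _) hs fun t ht => ?_
  have := mul_le_mul_of_nonneg_right (hc t ht) (Fa_integrand_pos (x := x) (a := a) (hs0 ht)).le
  rw [rpow_add_one (hs0 ht).ne']
  linarith

lemma mul_FaOn_le_FaOn_add_one (ha : -1 < a) (hs : MeasurableSet s) (hs0 : s ⊆ Ioi 0)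
    (hc : ∀ t ∈ s, c ≤ t) : c * FaOn a x s ≤ FaOn (a + 1) x s := by
  rw [FaOn, FaOn, ← integral_const_mul]
  refine setIntegral_mono_on ((integrableOn_Fa_integrand_of_subset ha hs0).const_mul _)
    (integrableOn_Fa_integrand_of_subset (by linarith) hs0) hs fun t ht => ?_
  have := mul_le_mul_of_nonneg_right (hc t ht) (Fa_integrand_pos (x := x) (a := a) (hs0 ht)).le
  rw [rpow_add_one (hs0 ht).ne']
  linarith

end FaOn

section Asymptotics

variable {a x c : ℝ}

lemma Fa_add_one_le (ha : -1 < a) (hx : 0 ≤ x) (hc : 0 < c) :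
    Fa (a + 1) x ≤ (c + exp (-(x * c)) * (Fa (a + 1) 0 / FaOn a 0 (Ioc 0 (c / 2)))) * Fa a x := by
  set K := FaOn a 0 (Ioc 0 (c / 2))
  have hK : 0 < K := FaOn_pos ha measurableSet_Ioc Ioc_subset_Ioi_self (by simp [hc])
  have head : FaOn (a + 1) x (Ioc 0 c) ≤ c * Fa a x :=
    (FaOn_add_one_le_mul ha measurableSet_Ioc Ioc_subset_Ioi_self fun t ht => ht.2).trans
      (mul_le_mul_of_nonneg_left (FaOn_le_Fa ha Ioc_subset_Ioi_self) hc.le)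
  have tail : FaOn (a + 1) x (Ioi c) ≤ exp (-(2 * x * c)) * Fa (a + 1) 0 :=
    (FaOn_le_exp_mul_FaOn_zero (by linarith) measurableSet_Ioi (Ioi_subset_Ioi hc.le)
      fun t ht => mul_le_mul_of_nonneg_left (le_of_lt ht) hx).trans
      (mul_le_mul_of_nonneg_left (FaOn_le_Fa (by linarith) (Ioi_subset_Ioi hc.le)) (exp_pos _).le)
  have lower : exp (-(x * c)) * K ≤ Fa a x := by
    have := exp_mul_FaOn_zero_le_FaOn (x := x) (c := c / 2) ha measurableSet_Ioc
      Ioc_subset_Ioi_self fun t ht => mul_le_mul_of_nonneg_left ht.2 hx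
    rw [show 2 * x * (c / 2) = x * c by ring] at this
    exact this.trans (FaOn_le_Fa ha Ioc_subset_Ioi_self)
  have hF1 : 0 ≤ Fa (a + 1) 0 := (Fa_pos (by linarith) 0).le
  calc Fa (a + 1) x = FaOn (a + 1) x (Ioc 0 c) + FaOn (a + 1) x (Ioi c) :=
        Fa_eq_FaOn_Ioc_add_FaOn_Ioi (by linarith) hc.le
    _ ≤ c * Fa a x + exp (-(2 * x * c)) * Fa (a + 1) 0 := add_le_add head tail
    _ = c * Fa a x + exp (-(x * c)) * (Fa (a + 1) 0 / K) * (exp (-(x * c)) * K) := by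
        rw [show -(2 * x * c) = -(x * c) + -(x * c) by ring, exp_add]
        field_simp
    _ ≤ c * Fa a x + exp (-(x * c)) * (Fa (a + 1) 0 / K) * Fa a x := by gcongr
    _ = _ := by ring

lemma tendsto_Fa_add_one_div_Fa_atTop (ha : -1 < a) :
    Tendsto (fun x => Fa (a + 1) x / Fa a x) atTop (nhds 0) := by
  refine tendsto_order.2 ⟨fun b hb => Eventually.of_forall fun x =>
    hb.trans_le (div_nonneg (Fa_pos (by linarith) x).le (Fa_pos ha x).le), fun ε hε => ?_⟩
  set C := Fa (a + 1) 0 / FaOn a 0 (Ioc 0 (ε / 2 / 2))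
  have hlim : Tendsto (fun x => ε / 2 + exp (-(x * (ε / 2))) * C) atTop (nhds (ε / 2)) := by
    have := ((tendsto_exp_neg_atTop_nhds_zero.comp
      (tendsto_id.atTop_mul_const (half_pos hε))).mul_const C).const_add (ε / 2)
    simpa using this
  filter_upwards [eventually_ge_atTop 0, hlim.eventually_lt_const (half_lt_self hε)] with x hx hlt
  rw [div_lt_iff₀ (Fa_pos ha x)]
  calc Fa (a + 1) x ≤ (ε / 2 + exp (-(x * (ε / 2))) * C) * Fa a x :=
        Fa_add_one_le ha hx (half_pos hε)
    _ < ε * Fa a x := mul_lt_mul_of_pos_right hlt (Fa_pos ha x)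

lemma eventually_FaOn_Ioc_le_FaOn_Ioi_atBot (ha : -1 < a) (hc : 0 < c) :
    ∀ᶠ x in atBot, FaOn a x (Ioc 0 c) ≤ FaOn a x (Ioi c) := by
  have hK : 0 < FaOn a 0 (Ioi (2 * c)) :=
    FaOn_pos ha measurableSet_Ioi (Ioi_subset_Ioi (by linarith)) (by simp)
  have hlim : Tendsto (fun x => exp (-(2 * x * c))) atBot atTop :=
    tendsto_exp_atTop.comp <| (tendsto_id.atBot_mul_const_of_neg (by linarith : -(2 * c) < 0)).congr
      fun x => by simp only [id]; ring
  filter_upwards [eventually_le_atBot 0, hlim.eventually_ge_atTop (Fa a 0 / FaOn a 0 (Ioi (2 * c)))]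
    with x hx hbig
  have head : FaOn a x (Ioc 0 c) ≤ exp (-(2 * x * c)) * Fa a 0 :=
    (FaOn_le_exp_mul_FaOn_zero ha measurableSet_Ioc Ioc_subset_Ioi_self
      fun t ht => mul_le_mul_of_nonpos_left ht.2 hx).trans
      (mul_le_mul_of_nonneg_left (FaOn_le_Fa ha Ioc_subset_Ioi_self) (exp_pos _).le)
  have tail : exp (-(2 * x * (2 * c))) * FaOn a 0 (Ioi (2 * c)) ≤ FaOn a x (Ioi c) :=
    (exp_mul_FaOn_zero_le_FaOn ha measurableSet_Ioi (Ioi_subset_Ioi (by linarith))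
      fun t ht => mul_le_mul_of_nonpos_left (le_of_lt ht) hx).trans
      (FaOn_mono_set ha measurableSet_Ioi (Ioi_subset_Ioi hc.le) (Ioi_subset_Ioi (by linarith)))
  have hexp : exp (-(2 * x * (2 * c))) = exp (-(2 * x * c)) * exp (-(2 * x * c)) := by
    rw [← exp_add]; ring_nf
  rw [div_le_iff₀ hK] at hbig
  rw [hexp, mul_assoc] at tail
  exact head.trans ((mul_le_mul_of_nonneg_left hbig (exp_pos _).le).trans tail)

lemma half_le_Fa_add_one_div_Fa (ha : -1 < a) (hc : 0 ≤ c)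
    (h : FaOn a x (Ioc 0 c) ≤ FaOn a x (Ioi c)) : c / 2 ≤ Fa (a + 1) x / Fa a x := by
  have tail := mul_FaOn_le_FaOn_add_one (x := x) ha measurableSet_Ioi (Ioi_subset_Ioi hc)
    fun t ht => le_of_lt ht
  have hhead : 0 ≤ FaOn (a + 1) x (Ioc 0 c) :=
    FaOn_nonneg measurableSet_Ioc Ioc_subset_Ioi_self
  rw [le_div_iff₀ (Fa_pos ha x), Fa_eq_FaOn_Ioc_add_FaOn_Ioi ha hc,
    Fa_eq_FaOn_Ioc_add_FaOn_Ioi (a := a + 1) (by linarith) hc]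
  nlinarith [mul_le_mul_of_nonneg_left h hc]

lemma tendsto_Fa_add_one_div_Fa_atBot (ha : -1 < a) :
    Tendsto (fun x => Fa (a + 1) x / Fa a x) atBot atTop := by
  refine tendsto_atTop.2 fun b => ?_
  have hc : 0 < 2 * max b 1 := by positivity
  filter_upwards [eventually_FaOn_Ioc_le_FaOn_Ioi_atBot ha hc] with x hx
  calc b ≤ 2 * max b 1 / 2 := by simp
    _ ≤ _ := half_le_Fa_add_one_div_Fa ha hc.le hx

end Asymptotics

/-- For `a > -1`, the ratio `F_{a+1}(x)/F_a(x)` tends to `0` as `x → +∞`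
and to `+∞` as `x → -∞`. -/
theorem Fa_ratio_asymptotics (a : ℝ) (ha : -1 < a) :
    Tendsto (fun x : ℝ => Fa (a + 1) x / Fa a x) atTop (nhds 0) ∧
    Tendsto (fun x : ℝ => Fa (a + 1) x / Fa a x) atBot atTop :=
  ⟨tendsto_Fa_add_one_div_Fa_atTop ha, tendsto_Fa_add_one_div_Fa_atBot ha⟩
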